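/- Fix reals r ≠ 0 and α, ρ > 0, and for κ > 0 set T(κ) = (α/(2ρ)) κ. Then the singular value ratio of data uniformly distributed on the arc of half-angle T(κ) satisfies lim_{κ → 0⁺} (1/κ) · √(Var₁(T(κ)) / Var₂(T(κ))) = α / (2 √15 ρ); that is, σ₂/σ₁ ≈ M κ with M = α/(2√15 ρ), where κ = 1/r is the curvature when α points are uniformly distributed with density ρ on the arc. -/

import Mathlib

/-!
Evaluating the integrals gives `Var₁ = r²/(2T²) · (T² + T sin T cos T - 2 sin² T)` and
`Var₂ = r²/(2T²) · (T² - T sin T cos T)`. Written in terms of `sin 2T` and `cos 2T`, the two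
brackets are `2T⁶/45 + O(T⁸)` and `2T⁴/3 + O(T⁶)`; the error terms come from the alternating
Taylor bounds for `sin` and `cos` on `[0, ∞)`, obtained from `cos ≤ 1` by integrating repeatedly.
Hence `Var₁ / Var₂ = T²/15 + O(T⁴)`, and with `T = (α/(2ρ)) κ` the square root divided by `κ`
tends to `α/(2ρ) · 1/√15`.
-/

open MeasureTheory intervalIntegral Filter

/-- Mean of the first coordinate under the uniform distribution on the arc. -/
noncomputable def mu1 (r T : ℝ) : ℝ := (1 / (2 * T)) * ∫ t in (-T)..T, r * Real.cos t

/-- Variance of the first coordinate under the uniform distribution on the arc. -/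
noncomputable def Var1 (r T : ℝ) : ℝ :=
  (1 / (2 * T)) * ∫ t in (-T)..T, (r * Real.cos t - mu1 r T) ^ 2

/-- Variance of the second coordinate under the uniform distribution on the arc. -/
noncomputable def Var2 (r T : ℝ) : ℝ :=
  (1 / (2 * T)) * ∫ t in (-T)..T, (r * Real.sin t) ^ 2

open Real Topology Finset
open scoped Nat

noncomputable def sinTaylor (n : ℕ) (x : ℝ) : ℝ :=
  ∑ k ∈ range n, (-1) ^ k * x ^ (2 * k + 1) / (2 * k + 1)!

noncomputable def cosTaylor (n : ℕ) (x : ℝ) : ℝ :=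
  ∑ k ∈ range n, (-1) ^ k * x ^ (2 * k) / (2 * k)!

theorem hasDerivAt_sinTaylor (n : ℕ) (x : ℝ) : HasDerivAt (sinTaylor n) (cosTaylor n x) x := by
  refine (HasDerivAt.fun_sum (u := range n) fun k _ =>
    ((hasDerivAt_pow (2 * k + 1) x).const_mul ((-1 : ℝ) ^ k)).div_const
      ((2 * k + 1)! : ℝ)).congr_deriv (sum_congr rfl fun k _ => ?_)
  rw [Nat.factorial_succ]
  push_cast
  field_simp

theorem cosTaylor_succ (n : ℕ) :
    cosTaylor (n + 1) = fun x : ℝ =>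
      1 - ∑ k ∈ range n, (-1) ^ k * x ^ (2 * k + 2) / ((2 * k + 2)! : ℝ) := by
  ext x
  rw [cosTaylor, sum_range_succ', add_comm, sub_eq_add_neg, ← sum_neg_distrib]
  congr 1
  · simp
  · refine sum_congr rfl fun k _ => ?_
    rw [mul_add, pow_succ]
    ring

theorem hasDerivAt_cosTaylor (n : ℕ) (x : ℝ) :
    HasDerivAt (cosTaylor (n + 1)) (-sinTaylor n x) x := by
  rw [cosTaylor_succ]
  refine ((hasDerivAt_const x (1 : ℝ)).sub (HasDerivAt.fun_sum (u := range n) fun k _ =>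
    ((hasDerivAt_pow (2 * k + 2) x).const_mul ((-1 : ℝ) ^ k)).div_const
      ((2 * k + 2)! : ℝ))).congr_deriv ?_
  rw [sinTaylor, zero_sub]
  congr 1
  refine sum_congr rfl fun k _ => ?_
  rw [Nat.factorial_succ]
  push_cast
  field_simp
  ring

theorem nonneg_of_hasDerivAt_nonneg {f f' : ℝ → ℝ} (hf : ∀ x, HasDerivAt f (f' x) x)
    (h0 : f 0 = 0) (hf' : ∀ x, 0 ≤ x → 0 ≤ f' x) {x : ℝ} (hx : 0 ≤ x) : 0 ≤ f x := by
  have hmono : MonotoneOn f (Set.Ici 0) :=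
    monotoneOn_of_hasDerivWithinAt_nonneg (convex_Ici 0)
      (continuous_iff_continuousAt.2 fun y => (hf y).continuousAt).continuousOn
      (fun y _ => (hf y).hasDerivWithinAt) (fun y hy => hf' y (interior_subset hy))
  simpa [h0] using hmono Set.self_mem_Ici hx hx

theorem sinTaylor_alternating_of_cosTaylor_alternating {n : ℕ}
    (hcos : ∀ x, 0 ≤ x → 0 ≤ (-1) ^ n * (cosTaylor (n + 1) x - cos x)) {x : ℝ} (hx : 0 ≤ x) :
    0 ≤ (-1) ^ n * (sinTaylor (n + 1) x - sin x) :=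
  nonneg_of_hasDerivAt_nonneg
    (fun y => ((hasDerivAt_sinTaylor _ y).sub (hasDerivAt_sin y)).const_mul _)
    (by simp [sinTaylor]) hcos hx

theorem cosTaylor_alternating_of_sinTaylor_alternating {n : ℕ}
    (hsin : ∀ x, 0 ≤ x → 0 ≤ (-1) ^ n * (sinTaylor (n + 1) x - sin x)) {x : ℝ} (hx : 0 ≤ x) :
    0 ≤ (-1) ^ (n + 1) * (cosTaylor (n + 2) x - cos x) :=
  nonneg_of_hasDerivAt_nonneg
    (fun y => ((hasDerivAt_cosTaylor _ y).sub (hasDerivAt_cos y)).const_mul _)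
    (by simp [cosTaylor_succ]) (fun y hy => (hsin y hy).trans_eq (by ring)) hx

theorem cosTaylor_sinTaylor_alternating (n : ℕ) {x : ℝ} (hx : 0 ≤ x) :
    0 ≤ (-1) ^ n * (cosTaylor (n + 1) x - cos x) ∧
      0 ≤ (-1) ^ n * (sinTaylor (n + 1) x - sin x) := by
  suffices hcos : ∀ x, 0 ≤ x → 0 ≤ (-1) ^ n * (cosTaylor (n + 1) x - cos x) from
    ⟨hcos x hx, sinTaylor_alternating_of_cosTaylor_alternating hcos hx⟩
  induction n with
  | zero => simpa [cosTaylor] using fun x _ => cos_le_one x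
  | succ n ih =>
    exact fun x hx => cosTaylor_alternating_of_sinTaylor_alternating
      (fun y hy => sinTaylor_alternating_of_cosTaylor_alternating ih hy) hx

theorem sin_le_sinTaylor (n : ℕ) {x : ℝ} (hx : 0 ≤ x) : sin x ≤ sinTaylor (2 * n + 1) x := by
  simpa [pow_mul] using (cosTaylor_sinTaylor_alternating (2 * n) hx).2

theorem sinTaylor_le_sin (n : ℕ) {x : ℝ} (hx : 0 ≤ x) : sinTaylor (2 * n + 2) x ≤ sin x := by
  simpa [pow_succ, pow_mul] using (cosTaylor_sinTaylor_alternating (2 * n + 1) hx).2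

theorem cos_le_cosTaylor (n : ℕ) {x : ℝ} (hx : 0 ≤ x) : cos x ≤ cosTaylor (2 * n + 1) x := by
  simpa [pow_mul] using (cosTaylor_sinTaylor_alternating (2 * n) hx).1

theorem cosTaylor_le_cos (n : ℕ) {x : ℝ} (hx : 0 ≤ x) : cosTaylor (2 * n + 2) x ≤ cos x := by
  simpa [pow_succ, pow_mul] using (cosTaylor_sinTaylor_alternating (2 * n + 1) hx).1

theorem sin_le_taylor_five {x : ℝ} (hx : 0 ≤ x) : sin x ≤ x - x ^ 3 / 6 + x ^ 5 / 120 :=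
  (sin_le_sinTaylor 1 hx).trans_eq (by norm_num [sinTaylor, sum_range_succ, Nat.factorial,
    neg_div, ← sub_eq_add_neg])

theorem sin_ge_taylor_seven {x : ℝ} (hx : 0 ≤ x) :
    x - x ^ 3 / 6 + x ^ 5 / 120 - x ^ 7 / 5040 ≤ sin x :=
  (sinTaylor_le_sin 1 hx).trans_eq' (by norm_num [sinTaylor, sum_range_succ, Nat.factorial,
    neg_div, ← sub_eq_add_neg])

theorem cos_ge_taylor_six {x : ℝ} (hx : 0 ≤ x) :
    1 - x ^ 2 / 2 + x ^ 4 / 24 - x ^ 6 / 720 ≤ cos x :=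
  (cosTaylor_le_cos 1 hx).trans_eq' (by norm_num [cosTaylor, sum_range_succ, Nat.factorial,
    neg_div, ← sub_eq_add_neg])

theorem cos_le_taylor_eight {x : ℝ} (hx : 0 ≤ x) :
    cos x ≤ 1 - x ^ 2 / 2 + x ^ 4 / 24 - x ^ 6 / 720 + x ^ 8 / 40320 :=
  (cos_le_cosTaylor 2 hx).trans_eq (by norm_num [cosTaylor, sum_range_succ, Nat.factorial,
    neg_div, ← sub_eq_add_neg])

theorem tendsto_div_pow_of_abs_sub_le {f : ℝ → ℝ} {a C : ℝ} {n k : ℕ} (hk : k ≠ 0)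
    (hf : ∀ x, 0 ≤ x → |f x - a * x ^ n| ≤ C * x ^ (n + k)) :
    Tendsto (fun x => f x / x ^ n) (𝓝[>] 0) (𝓝 a) := by
  have hbound : Tendsto (fun x : ℝ => C * x ^ k) (𝓝[>] 0) (𝓝 0) := by
    have : Continuous fun x : ℝ => C * x ^ k := by fun_prop
    simpa [zero_pow hk] using (this.tendsto 0).mono_left nhdsWithin_le_nhds
  refine tendsto_iff_norm_sub_tendsto_zero.2
    (squeeze_zero' (Eventually.of_forall fun _ => norm_nonneg _) ?_ hbound)
  filter_upwards [self_mem_nhdsWithin] with x (hx : 0 < x)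
  have hxn : 0 < x ^ n := pow_pos hx n
  have hdiv : f x / x ^ n - a = (f x - a * x ^ n) / x ^ n := by field_simp
  rw [Real.norm_eq_abs, hdiv, abs_div, abs_of_pos hxn, div_le_iff₀ hxn]
  calc |f x - a * x ^ n| ≤ C * x ^ (n + k) := hf x hx.le
    _ = C * x ^ k * x ^ n := by ring

noncomputable def scaledVar1 (T : ℝ) : ℝ := T ^ 2 + T * sin T * cos T - 2 * sin T ^ 2

noncomputable def scaledVar2 (T : ℝ) : ℝ := T ^ 2 - T * sin T * cos T

theorem mu1_eq (r T : ℝ) : mu1 r T = r * sin T / T := by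
  rw [mu1, intervalIntegral.integral_const_mul, integral_cos, sin_neg]
  ring

theorem Var1_eq (r T : ℝ) : Var1 r T = r ^ 2 / (2 * T ^ 2) * scaledVar1 T := by
  have hexpand : ∀ t, (r * cos t - mu1 r T) ^ 2
      = r ^ 2 * cos t ^ 2 - 2 * r * mu1 r T * cos t + mu1 r T ^ 2 := fun t => by ring
  have hcos : IntervalIntegrable cos volume (-T) T := continuous_cos.intervalIntegrable _ _
  have hcos_sq : IntervalIntegrable (fun t => cos t ^ 2) volume (-T) T :=
    (continuous_cos.pow 2).intervalIntegrable _ _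
  simp_rw [Var1, hexpand]
  rw [intervalIntegral.integral_add ((hcos_sq.const_mul _).sub (hcos.const_mul _))
      intervalIntegrable_const,
    intervalIntegral.integral_sub (hcos_sq.const_mul _) (hcos.const_mul _),
    intervalIntegral.integral_const_mul, intervalIntegral.integral_const_mul, integral_cos_sq,
    integral_cos, intervalIntegral.integral_const, smul_eq_mul, sin_neg, cos_neg, mu1_eq,
    scaledVar1]
  rcases eq_or_ne T 0 with rfl | hT
  · simp
  · field_simp
    ring

theorem Var2_eq (r T : ℝ) : Var2 r T = r ^ 2 / (2 * T ^ 2) * scaledVar2 T := by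
  simp_rw [Var2, mul_pow]
  rw [intervalIntegral.integral_const_mul, integral_sin_sq, sin_neg, cos_neg, scaledVar2]
  rcases eq_or_ne T 0 with rfl | hT
  · simp
  · field_simp
    ring

theorem Var1_div_Var2 {r T : ℝ} (hr : r ≠ 0) (hT : T ≠ 0) :
    Var1 r T / Var2 r T = scaledVar1 T / scaledVar2 T := by
  rw [Var1_eq, Var2_eq, mul_div_mul_left]
  positivity

theorem scaledVar1_eq_double_angle (T : ℝ) :
    scaledVar1 T = T ^ 2 + T / 2 * sin (2 * T) - 1 + cos (2 * T) := by
  rw [scaledVar1, sin_two_mul, cos_two_mul, cos_sq']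
  ring

theorem scaledVar2_eq_double_angle (T : ℝ) : scaledVar2 T = T ^ 2 - T / 2 * sin (2 * T) := by
  rw [scaledVar2, sin_two_mul]
  ring

theorem abs_scaledVar1_sub_le {T : ℝ} (hT : 0 ≤ T) :
    |scaledVar1 T - 2 / 45 * T ^ 6| ≤ 4 / 315 * T ^ 8 := by
  have h2T : 0 ≤ 2 * T := by positivity
  have hT2 : 0 ≤ T / 2 := by positivity
  rw [scaledVar1_eq_double_angle, abs_sub_le_iff]
  constructor <;> linarith [mul_le_mul_of_nonneg_left (sin_ge_taylor_seven h2T) hT2,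
    mul_le_mul_of_nonneg_left (sin_le_taylor_five h2T) hT2, cos_ge_taylor_six h2T,
    cos_le_taylor_eight h2T, pow_nonneg hT 8]

theorem abs_scaledVar2_sub_le {T : ℝ} (hT : 0 ≤ T) :
    |scaledVar2 T - 2 / 3 * T ^ 4| ≤ 2 / 15 * T ^ 6 := by
  have h2T : 0 ≤ 2 * T := by positivity
  have hT2 : 0 ≤ T / 2 := by positivity
  rw [scaledVar2_eq_double_angle, abs_sub_le_iff]
  constructor <;> linarith [mul_le_mul_of_nonneg_left (sin_ge_sub_cube h2T) hT2,
    mul_le_mul_of_nonneg_left (sin_le_taylor_five h2T) hT2, pow_nonneg hT 6]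

theorem tendsto_scaledVar1_div_scaledVar2 :
    Tendsto (fun T => scaledVar1 T / scaledVar2 T / T ^ 2) (𝓝[>] 0) (𝓝 (1 / 15)) := by
  have h1 := tendsto_div_pow_of_abs_sub_le (n := 6) (k := 2) two_ne_zero
    fun _ hT => abs_scaledVar1_sub_le hT
  have h2 := tendsto_div_pow_of_abs_sub_le (n := 4) (k := 2) two_ne_zero
    fun _ hT => abs_scaledVar2_sub_le hT
  rw [show (1 / 15 : ℝ) = 2 / 45 / (2 / 3) by norm_num]
  refine (h1.div h2 (by norm_num)).congr' ?_
  filter_upwards [self_mem_nhdsWithin] with T (hT : 0 < T)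
  simp only [Pi.div_apply]
  field_simp

theorem sqrt_Var1_div_Var2 {r T : ℝ} (hr : r ≠ 0) (hT : 0 < T) :
    √(Var1 r T / Var2 r T) = T * √(scaledVar1 T / scaledVar2 T / T ^ 2) := by
  have hsplit : scaledVar1 T / scaledVar2 T = T ^ 2 * (scaledVar1 T / scaledVar2 T / T ^ 2) := by
    field_simp
  rw [Var1_div_Var2 hr hT.ne']
  nth_rw 1 [hsplit]
  rw [sqrt_mul (sq_nonneg T), sqrt_sq hT.le]

/-- fix reals `r ≠ 0` and `α, ρ > 0`, and for `κ > 0` set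
`T(κ) = (α/(2ρ)) κ`. Then
`lim_{κ → 0⁺} (1/κ) · √(Var₁(T(κ)) / Var₂(T(κ))) = α / (2 √15 ρ)`;
that is, `σ₂/σ₁ ≈ M κ` with `M = α/(2 √15 ρ)`. -/
theorem singular_value_ratio_curvature (r α ρ : ℝ) (hr : r ≠ 0) (hα : 0 < α) (hρ : 0 < ρ) :
    Tendsto
      (fun κ : ℝ => (1 / κ) *
        Real.sqrt (Var1 r ((α / (2 * ρ)) * κ) / Var2 r ((α / (2 * ρ)) * κ)))
      (nhdsWithin 0 (Set.Ioi 0)) (nhds (α / (2 * Real.sqrt 15 * ρ))) := by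
  set c := α / (2 * ρ) with hc_def
  have hc : 0 < c := by positivity
  have hscale : Tendsto (c * ·) (𝓝[>] 0) (𝓝[>] 0) :=
    tendsto_iff_comap.2 (comap_mulLeft_nhdsGT_zero hc).ge
  have hlim := ((continuous_sqrt.tendsto _).comp
    (tendsto_scaledVar1_div_scaledVar2.comp hscale)).const_mul c
  have hval : c * √(1 / 15) = α / (2 * √15 * ρ) := by
    rw [sqrt_div' _ (by norm_num : (0 : ℝ) ≤ 15), Real.sqrt_one, hc_def]
    field_simp
  rw [← hval]
  refine hlim.congr' ?_
  filter_upwards [self_mem_nhdsWithin] with κ (hκ : 0 < κ)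
  rw [Function.comp_apply, Function.comp_apply, sqrt_Var1_div_Var2 hr (mul_pos hc hκ)]
  field_simp
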